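/- arXiv:1209.5373 — 10 statements merged into one kernel-verified Lean document; each statement's English description precedes it below -/
import Mathlib

section
/- For every n ∈ ℕ, the determinant of the n×n matrix A_[n] = (a_{i,j})_{0≤i,j<n} of Delannoy numbers equals 2^(n(n-1)/2). -/
open Finset Matrix


/-- The Delannoy numbers. -/
def del : ℕ → ℕ → ℕ
  | _, 0 => 1
  | 0, _ + 1 => 1
  | i + 1, j + 1 => del i (j + 1) + del (i + 1) j + del i j

def S (i j : ℕ) : ℤ := ∑ k ∈ Finset.range (i + 1), (Nat.choose i k : ℤ) * Nat.choose j k * 2 ^ k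

lemma S_ext (i j m : ℕ) (h : i < m) :
    ∑ k ∈ Finset.range m, (Nat.choose i k : ℤ) * Nat.choose j k * 2 ^ k = S i j := by
  refine (Finset.sum_subset (Finset.range_subset_range.2 h) fun k _ hk => ?_).symm
  rw [Finset.mem_range, not_lt] at hk
  simp [Nat.choose_eq_zero_of_lt (by omega : i < k)]

lemma S_zero_right (i : ℕ) : S i 0 = 1 := by
  rw [S, Finset.sum_eq_single_of_mem 0 (Finset.mem_range.2 (by omega))]
  · simp
  · rintro (_ | k) _ hk
    · omega
    · simp

lemma S_zero_left (j : ℕ) : S 0 j = 1 := by simp [S]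

lemma S_rec (i j : ℕ) : S (i + 1) (j + 1) = S i (j + 1) + S (i + 1) j + S i j := by
  rw [← S_ext i (j+1) (i+2) (by omega), ← S_ext (i+1) j (i+2) (by omega),
    ← S_ext i j (i+2) (by omega), S]
  rw [Finset.sum_range_succ' _ (i+1), Finset.sum_range_succ' _ (i+1),
    Finset.sum_range_succ' _ (i+1), Finset.sum_range_succ' _ (i+1)]
  have key : ∀ k ∈ Finset.range (i+1),
      ((Nat.choose (i+1) (k+1) : ℤ) * Nat.choose (j+1) (k+1) * 2 ^ (k+1)) =
      ((Nat.choose i (k+1) : ℤ) * Nat.choose (j+1) (k+1) * 2 ^ (k+1)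
       + (Nat.choose (i+1) (k+1) : ℤ) * Nat.choose j (k+1) * 2 ^ (k+1)
       + (Nat.choose i (k+1) : ℤ) * Nat.choose j (k+1) * 2 ^ (k+1))
      + (2 * ((Nat.choose i k : ℤ) * Nat.choose j k * 2 ^ k)
         - 2 * ((Nat.choose i (k+1) : ℤ) * Nat.choose j (k+1) * 2 ^ (k+1))) := by
    intro k _
    rw [Nat.choose_succ_succ i k, Nat.choose_succ_succ j k]
    push_cast
    ring
  rw [Finset.sum_congr rfl key, Finset.sum_add_distrib, Finset.sum_add_distrib,
    Finset.sum_add_distrib, Finset.sum_sub_distrib]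
  have tel : ∑ k ∈ Finset.range (i+1),
      ((2:ℤ) * ((Nat.choose i k : ℤ) * Nat.choose j k * 2 ^ k))
      - ∑ k ∈ Finset.range (i+1),
      ((2:ℤ) * ((Nat.choose i (k+1) : ℤ) * Nat.choose j (k+1) * 2 ^ (k+1))) = 2 := by
    rw [← Finset.sum_sub_distrib, Finset.sum_range_sub'
      (f := fun k => (2:ℤ) * ((Nat.choose i k : ℤ) * Nat.choose j k * 2 ^ k))]
    simp [Nat.choose_eq_zero_of_lt (by omega : i < i + 1)]
  rw [tel]
  simp
  ring

lemma del_eq : ∀ i j, (del i j : ℤ) = S i j := by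
  intro i
  induction i with
  | zero =>
    intro j
    cases j with
    | zero => simp [del, S_zero_left]
    | succ j => simp [del, S_zero_left]
  | succ i ih =>
    intro j
    induction j with
    | zero => simp [del, S_zero_right]
    | succ j ihj =>
      have h : del (i+1) (j+1) = del i (j+1) + del (i+1) j + del i j := by rw [del]
      rw [h]
      push_cast
      rw [ih, ih, ihj, S_rec]

theorem det_delannoy_matrix (n : ℕ) :
    Matrix.det (Matrix.of fun i j : Fin n => (del i j : ℤ)) = 2 ^ (n * (n - 1) / 2) := by
  set L : Matrix (Fin n) (Fin n) ℤ := Matrix.of fun i k : Fin n => (Nat.choose i k : ℤ) with hL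
  set D : Matrix (Fin n) (Fin n) ℤ := Matrix.diagonal fun k : Fin n => (2 : ℤ) ^ (k : ℕ) with hD
  have factor : (Matrix.of fun i j : Fin n => (del i j : ℤ)) = L * D * Lᵀ := by
    ext i j
    rw [Matrix.mul_apply]
    simp only [Matrix.mul_apply, Matrix.transpose_apply, Matrix.diagonal_apply, hL, hD,
      Matrix.of_apply]
    rw [del_eq, ← S_ext i j n i.isLt]
    simp only [mul_ite, mul_zero, Finset.sum_ite_eq', Finset.mem_univ, if_true]
    rw [← Fin.sum_univ_eq_sum_range (fun k => ((i:ℕ).choose k : ℤ) * (j:ℕ).choose k * 2 ^ k) n]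
    exact Finset.sum_congr rfl fun k _ => by ring
  rw [factor, Matrix.det_mul, Matrix.det_mul, Matrix.det_transpose]
  have hLdet : L.det = 1 := by
    have ht : L.BlockTriangular OrderDual.toDual := by
      intro a b hab
      simp only [hL, Matrix.of_apply]
      have hab' : (a : ℕ) < (b : ℕ) := hab
      norm_num [Nat.choose_eq_zero_of_lt hab']
    rw [Matrix.det_of_lowerTriangular L ht]
    simp [hL]
  have hDdet : D.det = 2 ^ (n * (n - 1) / 2) := by
    rw [hD, Matrix.det_diagonal, Finset.prod_pow_eq_pow_sum]
    congr 1
    rw [Fin.sum_univ_eq_sum_range (fun k => k) n, Finset.sum_range_id]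
  rw [hLdet, hDdet]; ring
end

section
/- For n > 0, with E_[n] the upper unitriangular n×n matrix having entries -1 directly above the diagonal and 0 elsewhere off the diagonal, the product (E_[n])^T · A_[n] · E_[n] is the block-diagonal matrix with blocks (1) and 2·A_[n-1], where A_[n] is the matrix of Delannoy numbers. -/
open Matrix

lemma psum {n : ℕ} (f : Fin n → ℤ) (j : Fin n) :
    (∑ l, f l * (if l = j then (1:ℤ) else if (l : ℕ) + 1 = (j : ℕ) then -1 else 0))
    = f j - ∑ l : Fin n, (if (l : ℕ) + 1 = (j : ℕ) then f l else 0) := by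
  have h : ∀ l : Fin n,
      f l * (if l = j then (1:ℤ) else if (l : ℕ) + 1 = (j : ℕ) then -1 else 0)
      = (if l = j then f l else 0) - (if (l : ℕ) + 1 = (j : ℕ) then f l else 0) := by
    intro l
    by_cases h1 : l = j
    · have : ¬ ((l : ℕ) + 1 = (j : ℕ)) := by subst h1; omega
      simp [h1, this]
    · by_cases h2 : (l : ℕ) + 1 = (j : ℕ) <;> simp [h1, h2] <;> ring
  simp only [h, Finset.sum_sub_distrib, Finset.sum_ite_eq' Finset.univ j f,
    Finset.mem_univ, if_true]

lemma ssum {n : ℕ} (f : Fin n → ℤ) (j : Fin n) :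
    (∑ l : Fin n, (if (l : ℕ) + 1 = (j : ℕ) then f l else 0))
    = if h : 0 < (j : ℕ) then f ⟨(j : ℕ) - 1, by omega⟩ else 0 := by
  split
  · next h =>
    rw [Finset.sum_eq_single (⟨(j : ℕ) - 1, by omega⟩ : Fin n)]
    · simp; omega
    · intro b _ hb
      have : ¬ ((b : ℕ) + 1 = (j : ℕ)) := by
        intro hc
        apply hb; apply Fin.ext; simp; omega
      simp [this]
    · simp
  · next h =>
    apply Finset.sum_eq_zero
    intro l _
    have : ¬ ((l : ℕ) + 1 = (j : ℕ)) := by omega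
    simp [this]

theorem delannoy_conjugation (n : ℕ) (hn : 0 < n)
    (A : Matrix (Fin n) (Fin n) ℤ) (hA : ∀ i j, A i j = del i j)
    (E : Matrix (Fin n) (Fin n) ℤ)
    (hE : ∀ i j, E i j = if i = j then 1 else if (i : ℕ) + 1 = (j : ℕ) then -1 else 0) :
    E.transpose * A * E = Matrix.of fun i j : Fin n =>
      if (i : ℕ) = 0 ∨ (j : ℕ) = 0 then (if i = j then 1 else 0)
      else 2 * (del ((i : ℕ) - 1) ((j : ℕ) - 1) : ℤ) := by
  ext i j
  rw [Matrix.mul_apply]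
  have hEA : ∀ l : Fin n, (E.transpose * A) i l
      = A i l - (if h : 0 < (i : ℕ) then A ⟨(i:ℕ)-1, by omega⟩ l else 0) := by
    intro l
    rw [Matrix.mul_apply]
    have : ∀ k, E.transpose i k * A k l = A k l * E k i := by
      intro k; rw [Matrix.transpose_apply, mul_comm]
    simp only [this, hE, psum (fun k => A k l) i, ssum (fun k => A k l) i]
  simp only [hEA, hE]
  rw [psum (fun l => A i l - (if h : 0 < (i : ℕ) then A ⟨(i:ℕ)-1, by omega⟩ l else 0)) j,
    ssum (fun l => A i l - (if h : 0 < (i : ℕ) then A ⟨(i:ℕ)-1, by omega⟩ l else 0)) j]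
  by_cases hi : 0 < (i : ℕ) <;> by_cases hj : 0 < (j : ℕ)
  · simp only [dif_pos hi, dif_pos hj, Matrix.of_apply, hA]
    have h1 : ¬ ((i:ℕ) = 0 ∨ (j:ℕ) = 0) := by omega
    rw [if_neg h1]
    obtain ⟨i', hi'⟩ : ∃ i', (i:ℕ) = i' + 1 := ⟨(i:ℕ)-1, by omega⟩
    obtain ⟨j', hj'⟩ : ∃ j', (j:ℕ) = j' + 1 := ⟨(j:ℕ)-1, by omega⟩
    simp only [hi', hj', Nat.add_sub_cancel, del]
    push_cast
    ring
  · have hj0 : (j:ℕ) = 0 := by omega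
    simp only [dif_pos hi, dif_neg hj, Matrix.of_apply, hA]
    rw [if_pos (Or.inr hj0)]
    obtain ⟨i', hi'⟩ : ∃ i', (i:ℕ) = i' + 1 := ⟨(i:ℕ)-1, by omega⟩
    have : ¬ (i = j) := by intro h; rw [h] at hi; omega
    rw [if_neg this]
    have e1 : del (i:ℕ) (j:ℕ) = 1 := by simp [hj0, del]
    have e2 : del ((⟨(i:ℕ)-1, by omega⟩ : Fin n) : ℕ) (j:ℕ) = 1 := by
      simp [hj0, del]
    rw [e1, e2]; ring
  · have hi0 : (i:ℕ) = 0 := by omega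
    simp only [dif_neg hi, dif_pos hj, Matrix.of_apply, hA]
    rw [if_pos (Or.inl hi0)]
    have : ¬ (i = j) := by intro h; rw [← h] at hj; omega
    rw [if_neg this]
    obtain ⟨j', hj'⟩ : ∃ j', (j:ℕ) = j' + 1 := ⟨(j:ℕ)-1, by omega⟩
    have e1 : del (i:ℕ) (j:ℕ) = 1 := by simp [hi0, hj', del]
    have e2 : del (i:ℕ) (((⟨(j:ℕ)-1, by omega⟩ : Fin n)) : ℕ) = 1 := by
      simp only [hi0]
      rcases Nat.eq_zero_or_pos ((j:ℕ)-1) with h | h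
      · simp [h, del]
      · obtain ⟨m, hm⟩ : ∃ m, (j:ℕ)-1 = m+1 := ⟨(j:ℕ)-2, by omega⟩
        simp [hm, del]
    rw [e1, e2]; ring
  · have hi0 : (i:ℕ) = 0 := by omega
    have hj0 : (j:ℕ) = 0 := by omega
    simp only [dif_neg hi, dif_neg hj, Matrix.of_apply, hA]
    rw [if_pos (Or.inl hi0)]
    have hij : i = j := Fin.ext (by omega)
    rw [if_pos hij, hij]
    have : del (j:ℕ) (j:ℕ) = 1 := by simp [hj0, del]
    rw [this]; ring
end

section
/- Every disjoint n-family is a Schröder n-family: if (P_0,...,P_{n-1}) are Schröder-type paths with P_i from (i,0) to (0,i) and pairwise disjoint supports, then every point (k,l) on P_i satisfies k+l ≥ i. -/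
/-!
Induction on `i`. If a point `q` of `P i` had `q.1 + q.2 < i`, then `q` would lie strictly below
`P (i - 1)`: that path meets column `q.1` in a point on or above the antidiagonal `x + y = i - 1`,
and disjointness makes the inequality strict. Since `P (i - 1)` moves monotonically north-west and
meets every column between `0` and `i - 1`, every Schröder step of `P i` after `q` keeps it strictly
below `P (i - 1)` (again by disjointness). So `P i` would end at `(0, i)` strictly below a point of
`P (i - 1)` in column `0`, whose height is at most `i - 1`.
-/

/-- A Schröder-type path from `src` to `tgt`. -/
def IsSchroderPath (p : List (ℤ × ℤ)) (src tgt : ℤ × ℤ) : Prop :=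
  p.head? = some src ∧ p.getLast? = some tgt ∧
    p.Chain' fun u v => v - u = (0, 1) ∨ v - u = (-1, 1) ∨ v - u = (-1, 0)

def SchroderStep (u v : ℤ × ℤ) : Prop :=
  v - u = (0, 1) ∨ v - u = (-1, 1) ∨ v - u = (-1, 0)

def Northwest (u v : ℤ × ℤ) : Prop :=
  v.1 ≤ u.1 ∧ u.2 ≤ v.2

def IsBelow (Q : List (ℤ × ℤ)) (x : ℤ × ℤ) : Prop :=
  ∃ w ∈ Q, w.1 = x.1 ∧ x.2 < w.2

theorem schroderStep_iff {u v : ℤ × ℤ} :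
    SchroderStep u v ↔ (v.1 = u.1 ∧ v.2 = u.2 + 1) ∨ (v.1 = u.1 - 1 ∧ v.2 = u.2 + 1) ∨
      (v.1 = u.1 - 1 ∧ v.2 = u.2) := by
  simp only [SchroderStep, Prod.ext_iff, Prod.fst_sub, Prod.snd_sub]
  omega

theorem SchroderStep.northwest {u v : ℤ × ℤ} (h : SchroderStep u v) : Northwest u v := by
  rw [schroderStep_iff] at h
  unfold Northwest
  omega

theorem pairwise_northwest_of_isChain {p : List (ℤ × ℤ)} (hp : p.IsChain SchroderStep) :
    p.Pairwise Northwest :=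
  haveI : Trans Northwest Northwest Northwest := ⟨fun h₁ h₂ => ⟨h₂.1.trans h₁.1, h₁.2.trans h₂.2⟩⟩
  (hp.imp fun _ _ => SchroderStep.northwest).pairwise

theorem northwest_of_mem_of_isChain_cons {x y : ℤ × ℤ} {r : List (ℤ × ℤ)}
    (h : (x :: r).IsChain SchroderStep) (hy : y ∈ x :: r) : Northwest x y := by
  rcases List.mem_cons.mp hy with rfl | hy
  · exact ⟨le_rfl, le_rfl⟩
  · exact (List.pairwise_cons.mp (pairwise_northwest_of_isChain h)).1 y hy

theorem snd_le_snd_of_pairwise_northwest {p : List (ℤ × ℤ)} (hp : p.Pairwise Northwest)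
    {a b : ℤ × ℤ} (ha : a ∈ p) (hb : b ∈ p) (hab : b.1 < a.1) : a.2 ≤ b.2 := by
  induction hp with
  | nil => simp at ha
  | @cons c l hc _ ih =>
    rw [List.mem_cons] at ha hb
    rcases ha with rfl | ha <;> rcases hb with rfl | hb
    · exact le_rfl
    · exact (hc b hb).2
    · have := (hc a ha).1
      omega
    · exact ih ha hb

namespace IsSchroderPath

variable {p : List (ℤ × ℤ)} {src tgt : ℤ × ℤ}

theorem isChain (hp : IsSchroderPath p src tgt) : p.IsChain SchroderStep :=
  hp.2.2

theorem northwest_src (hp : IsSchroderPath p src tgt) {w : ℤ × ℤ} (hw : w ∈ p) :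
    Northwest src w := by
  obtain ⟨l, rfl⟩ := List.head?_eq_some_iff.mp hp.1
  exact northwest_of_mem_of_isChain_cons hp.isChain hw

theorem northwest_tgt (hp : IsSchroderPath p src tgt) {w : ℤ × ℤ} (hw : w ∈ p) :
    Northwest w tgt := by
  obtain ⟨l, rfl⟩ := List.getLast?_eq_some_iff.mp hp.2.1
  rcases List.mem_append.mp hw with hw | hw
  · exact (List.pairwise_append.mp (pairwise_northwest_of_isChain hp.isChain)).2.2 w hw tgt
      (List.mem_singleton_self tgt)
  · rw [List.mem_singleton.mp hw]
    exact ⟨le_rfl, le_rfl⟩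

theorem exists_mem_fst_eq (hp : IsSchroderPath p src tgt) {c : ℤ} (htc : tgt.1 ≤ c)
    (hcs : c ≤ src.1) : ∃ w ∈ p, w.1 = c := by
  induction p generalizing src with
  | nil => simp [IsSchroderPath] at hp
  | cons u l ih =>
    obtain ⟨hsrc, htgt, hchain⟩ := hp
    obtain rfl : u = src := by simpa using hsrc
    cases l with
    | nil =>
      obtain rfl : u = tgt := by simpa using htgt
      exact ⟨u, List.mem_cons_self, by omega⟩
    | cons v l =>
      replace hchain : (u :: v :: l).IsChain SchroderStep := hchain
      rw [List.isChain_cons_cons] at hchain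
      by_cases hcv : c ≤ v.1
      · obtain ⟨w, hw, rfl⟩ := ih ⟨rfl, by simpa using htgt, hchain.2⟩ hcv
        exact ⟨w, List.mem_cons_of_mem _ hw, rfl⟩
      · have := schroderStep_iff.mp hchain.1
        exact ⟨u, List.mem_cons_self, by omega⟩

end IsSchroderPath

section IsBelow

variable {Q : List (ℤ × ℤ)}

theorem isBelow_of_le {w x : ℤ × ℤ} (hw : w ∈ Q) (hwx : w.1 = x.1) (hle : x.2 ≤ w.2)
    (hx : x ∉ Q) : IsBelow Q x := by
  refine ⟨w, hw, hwx, lt_of_le_of_ne hle fun h => hx ?_⟩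
  rwa [show x = w from Prod.ext hwx.symm h]

theorem IsBelow.of_schroderStep (hQ : Q.Pairwise Northwest) {u v : ℤ × ℤ} (hu : IsBelow Q u)
    (huv : SchroderStep u v) (hcol : ∃ w ∈ Q, w.1 = v.1) (hv : v ∉ Q) : IsBelow Q v := by
  obtain ⟨w, hw, hwu, hlt⟩ := hu
  obtain ⟨w', hw', hw'v⟩ := hcol
  rcases schroderStep_iff.mp huv with ⟨h₁, h₂⟩ | ⟨h₁, h₂⟩ | ⟨h₁, h₂⟩
  · exact isBelow_of_le hw (by omega) (by omega) hv
  all_goals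
    have := snd_le_snd_of_pairwise_northwest hQ hw hw' (by omega)
    exact isBelow_of_le hw' hw'v (by omega) hv

theorem IsBelow.of_isChain (hQ : Q.Pairwise Northwest) {x : ℤ × ℤ} {r : List (ℤ × ℤ)}
    (hr : (x :: r).IsChain SchroderStep) (hcol : ∀ y ∈ x :: r, ∃ w ∈ Q, w.1 = y.1)
    (hdisj : ∀ y ∈ x :: r, y ∉ Q) (hx : IsBelow Q x) : ∀ y ∈ x :: r, IsBelow Q y :=
  (List.IsChain.iff_mem.mp hr).induction _ _
    (fun _ _ ⟨_, hy, hstep⟩ hbelow => hbelow.of_schroderStep hQ hstep (hcol _ hy) (hdisj _ hy))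
    fun _ => hx

end IsBelow

theorem IsSchroderPath.add_one_le_fst_add_snd_of_disjoint {j : ℤ} {Q R : List (ℤ × ℤ)}
    (hQ : IsSchroderPath Q (j, 0) (0, j)) (hQj : ∀ w ∈ Q, j ≤ w.1 + w.2)
    (hR : IsSchroderPath R (j + 1, 0) (0, j + 1)) (hQR : ∀ x ∈ R, x ∉ Q) :
    ∀ q ∈ R, j + 1 ≤ q.1 + q.2 := by
  intro q hq
  by_contra! hlt
  obtain ⟨-, hq₂⟩ := hR.northwest_src hq
  obtain ⟨hq₁, -⟩ := hR.northwest_tgt hq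
  dsimp only at hq₁ hq₂
  obtain ⟨w, hw, hwq⟩ := hQ.exists_mem_fst_eq (c := q.1) hq₁ (by dsimp only; omega)
  have hq_below : IsBelow Q q :=
    isBelow_of_le hw hwq (by linarith [hQj w hw]) (hQR q hq)
  obtain ⟨s, t, rfl⟩ := List.append_of_mem hq
  have hsuffix : (q :: t).IsChain SchroderStep := hR.isChain.right_of_append
  have hcol : ∀ y ∈ q :: t, ∃ w ∈ Q, w.1 = y.1 := by
    intro y hy
    obtain ⟨hy₀, -⟩ := hR.northwest_tgt (List.mem_append_right s hy)
    obtain ⟨hyq, -⟩ := northwest_of_mem_of_isChain_cons hsuffix hy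
    exact hQ.exists_mem_fst_eq hy₀ (by dsimp only; omega)
  have htgt_mem : (0, j + 1) ∈ q :: t := by
    have := hR.2.1
    rw [List.getLast?_append_cons] at this
    exact List.mem_of_getLast? this
  obtain ⟨w, hw, -, hw₂⟩ := IsBelow.of_isChain (pairwise_northwest_of_isChain hQ.isChain) hsuffix
    hcol (fun y hy => hQR y (List.mem_append_right s hy)) hq_below _ htgt_mem
  have := (hQ.northwest_tgt hw).2
  dsimp only at this hw₂
  omega

theorem disjoint_family_is_schroder (n : ℕ) (P : Fin n → List (ℤ × ℤ))
    (hpath : ∀ i : Fin n, IsSchroderPath (P i) ((i : ℤ), 0) (0, (i : ℤ)))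
    (hdisj : ∀ i j : Fin n, i ≠ j → ∀ x : ℤ × ℤ, x ∈ P i → x ∉ P j) :
    ∀ i : Fin n, ∀ q ∈ P i, (i : ℤ) ≤ q.1 + q.2 := by
  rintro ⟨k, hk⟩
  induction k with
  | zero =>
    intro q hq
    obtain ⟨-, hq₂⟩ := (hpath ⟨0, hk⟩).northwest_src hq
    obtain ⟨hq₁, -⟩ := (hpath ⟨0, hk⟩).northwest_tgt hq
    simp only [Nat.cast_zero] at hq₁ hq₂ ⊢
    omega
  | succ k ih =>
    have hQ := hpath ⟨k, by omega⟩
    have hR := hpath ⟨k + 1, hk⟩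
    push_cast at hQ hR ⊢
    exact hQ.add_one_le_fst_add_snd_of_disjoint (ih _) hR (hdisj _ _ (by simp))
end

section
/- If π is a permutation of {0,...,n-1} and there exists a π-family (P_0,...,P_{n-1}) (with P_i a Schröder-type path from (i,0) to (0,π(i))) whose supports are pairwise disjoint, then π is the identity permutation. -/
namespace SchroderStep

lemma coords {u v : ℤ × ℤ} (h : SchroderStep u v) :
    (v.1 = u.1 ∧ v.2 = u.2 + 1) ∨ (v.1 = u.1 - 1 ∧ v.2 = u.2 + 1) ∨
      (v.1 = u.1 - 1 ∧ v.2 = u.2) := by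
  rcases h with h | h | h <;> rw [Prod.ext_iff] at h <;>
    simp only [Prod.fst_sub, Prod.snd_sub] at h <;> omega

lemma le_fst_and_snd_le_of_getLast {l : List (ℤ × ℤ)} {t : ℤ × ℤ}
    (hc : l.IsChain SchroderStep) (hl : l.getLast? = some t) :
    ∀ q ∈ l, t.1 ≤ q.1 ∧ q.2 ≤ t.2 :=
  hc.backwards_induction _ _ (fun _ _ h hy ↦ by rcases h.coords with h | h | h <;> omega)
    fun lne ↦ by
      rw [List.getLast?_eq_some_getLast lne, Option.some_inj] at hl
      simp [hl]

theorem exists_common_point {e b b' : ℤ} (u u' : ℤ × ℤ) (l l' : List (ℤ × ℤ))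
    (hc : (u :: l).IsChain SchroderStep) (hc' : (u' :: l').IsChain SchroderStep)
    (hl : (u :: l).getLast? = some (e, b)) (hl' : (u' :: l').getLast? = some (e, b'))
    (hb : b' < b) (hrow : u.2 = u'.2) (hleft : u.1 < u'.1) :
    ∃ q ∈ u :: l, q ∈ u' :: l' := by
  induction l generalizing u u' l' with
  | nil =>
    have := (le_fst_and_snd_le_of_getLast hc' hl' u' List.mem_cons_self).2
    simp only [List.getLast?_singleton, Option.some_inj] at hl
    subst hl
    omega
  | cons v l ih =>
    induction l' generalizing u' with
    | nil =>
      have := (le_fst_and_snd_le_of_getLast hc hl u List.mem_cons_self).1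
      simp only [List.getLast?_singleton, Option.some_inj] at hl'
      subst hl'
      omega
    | cons v' l' ih' =>
      have hstep := (List.isChain_cons_cons.mp hc).1.coords
      have hstep' := (List.isChain_cons_cons.mp hc').1.coords
      have htail := (List.isChain_cons_cons.mp hc).2
      have htail' := (List.isChain_cons_cons.mp hc').2
      rw [List.getLast?_cons_cons] at hl hl'
      -- Walk the right chain along the row while it stays there, then the left one; once both
      -- move up, the left one lands weakly left of the right one, and equality is a common point.
      by_cases hflat' : v'.2 = u'.2
      · by_cases hmeet : v' = u
        · exact ⟨u, List.mem_cons_self, hmeet ▸ List.mem_cons_of_mem _ List.mem_cons_self⟩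
        · have : u.1 < v'.1 := by
            have : u.1 ≠ v'.1 := fun h ↦ hmeet (Prod.ext h.symm (by omega))
            omega
          obtain ⟨q, hq, hq'⟩ := ih' v' htail' hl' (by omega) this
          exact ⟨q, hq, List.mem_cons_of_mem _ hq'⟩
      · by_cases hflat : v.2 = u.2
        · obtain ⟨q, hq, hq'⟩ := ih v u' (v' :: l') htail hc' hl
            (by rwa [List.getLast?_cons_cons]) (by omega) (by omega)
          exact ⟨q, List.mem_cons_of_mem _ hq, hq'⟩
        · by_cases hmeet : v = v'
          · exact ⟨v, List.mem_cons_of_mem _ List.mem_cons_self,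
              hmeet ▸ List.mem_cons_of_mem _ List.mem_cons_self⟩
          · have : v.1 < v'.1 := by
              have : v.1 ≠ v'.1 := fun h ↦ hmeet (Prod.ext h (by omega))
              omega
            obtain ⟨q, hq, hq'⟩ := ih v v' l' htail htail' hl hl' (by omega) this
            exact ⟨q, List.mem_cons_of_mem _ hq, List.mem_cons_of_mem _ hq'⟩

end SchroderStep

theorem IsSchroderPath.exists_common_point {p p' : List (ℤ × ℤ)} {a a' c e b b' : ℤ}
    (h : IsSchroderPath p (a, c) (e, b)) (h' : IsSchroderPath p' (a', c) (e, b'))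
    (ha : a < a') (hb : b' < b) : ∃ q ∈ p, q ∈ p' := by
  obtain ⟨hh, hl, hc⟩ := h
  obtain ⟨hh', hl', hc'⟩ := h'
  obtain ⟨l, rfl⟩ := List.head?_eq_some_iff.mp hh
  obtain ⟨l', rfl⟩ := List.head?_eq_some_iff.mp hh'
  exact SchroderStep.exists_common_point _ _ l l' hc hc' hl hl' hb rfl ha

theorem disjoint_pi_family_identity (n : ℕ) (π : Equiv.Perm (Fin n))
    (P : Fin n → List (ℤ × ℤ))
    (hpath : ∀ i : Fin n, IsSchroderPath (P i) ((i : ℤ), 0) (0, ((π i : ℕ) : ℤ)))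
    (hdisj : ∀ i j : Fin n, i ≠ j → ∀ x : ℤ × ℤ, x ∈ P i → x ∉ P j) :
    π = 1 := by
  have hmono : Monotone π := by
    intro i j hij
    by_contra! hlt
    have hne : i ≠ j := ne_of_apply_ne π hlt.ne'
    obtain ⟨q, hqi, hqj⟩ := (hpath i).exists_common_point (hpath j)
      (by exact_mod_cast lt_of_le_of_ne hij hne) (by exact_mod_cast hlt)
    exact hdisj i j hne q hqi hqj
  exact Equiv.ext (congrFun (hmono.strictMono_of_injective π.injective).eq_id)
end

section
/- Let h_0, h_1 : {0,...,k} → ℤ be weakly decreasing functions with steps of size at most 1 (i.e., h(j)-h(j+1) ∈ {0,1}) and h_1(0) = h_0(0)+1. Define d_j = max over 0 ≤ j' ≤ j of (h_0(j')+1-h_1(j')), and set h'_0(j)=h_0(j)-d_j, h'_1(j)=h_1(j)+d_j. Then h'_1(j) - h'_0(j) - 1 ≥ d_j ≥ 0 for all 0 ≤ j ≤ k; in particular h'_0(j) < h'_1(j) for all j. -/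
/-- `dseq h0 h1 j = max_{0 ≤ j' ≤ j} (h0 j' + 1 - h1 j')`. -/
def dseq (h0 h1 : ℕ → ℤ) (j : ℕ) : ℤ :=
  (Finset.range (j + 1)).sup' (Finset.nonempty_range_iff.mpr j.succ_ne_zero)
    fun j' => h0 j' + 1 - h1 j'

theorem forward_gap (k : ℕ) (h0 h1 : ℕ → ℤ)
    (hd0 : ∀ j < k, h0 (j + 1) = h0 j ∨ h0 (j + 1) = h0 j - 1)
    (hd1 : ∀ j < k, h1 (j + 1) = h1 j ∨ h1 (j + 1) = h1 j - 1)
    (hinit : h1 0 = h0 0 + 1) :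
    ∀ j ≤ k, 0 ≤ dseq h0 h1 j ∧
      dseq h0 h1 j ≤ (h1 j + dseq h0 h1 j) - (h0 j - dseq h0 h1 j) - 1 ∧
      h0 j - dseq h0 h1 j < h1 j + dseq h0 h1 j := by
  intro j _
  have h0mem : (0 : ℕ) ∈ Finset.range (j + 1) := Finset.mem_range.mpr j.succ_pos
  have hjmem : j ∈ Finset.range (j + 1) := Finset.mem_range.mpr (Nat.lt_succ_self j)
  have hle0 : h0 0 + 1 - h1 0 ≤ dseq h0 h1 j := by unfold dseq; exact Finset.le_sup' (fun j' => h0 j' + 1 - h1 j') h0mem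
  have hlej : h0 j + 1 - h1 j ≤ dseq h0 h1 j := by unfold dseq; exact Finset.le_sup' (fun j' => h0 j' + 1 - h1 j') hjmem
  refine ⟨by omega, by omega, by omega⟩
end

section
/- With h_0, h_1 weakly decreasing unit-step functions on {0,...,k}, h_1(0)=h_0(0)+1, d_j = max_{j'≤j}(h_0(j')+1-h_1(j')), and h'_0 = h_0 - d, h'_1 = h_1 + d: if j < k and d_j < d_{j+1}, then h_0(j)=h_0(j+1) and h_1(j)=h_1(j+1)+1 (i.e., the step from column j to j+1 is horizontal in P_i and diagonal in P_{i+1}), and moreover h'_0(j+1)=h'_0(j)-1 and h'_1(j+1)=h'_1(j) (the directions are interchanged after the transformation). -/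
theorem dseq_increase_step (k : ℕ) (h0 h1 : ℕ → ℤ)
    (hd0 : ∀ j < k, h0 (j + 1) = h0 j ∨ h0 (j + 1) = h0 j - 1)
    (hd1 : ∀ j < k, h1 (j + 1) = h1 j ∨ h1 (j + 1) = h1 j - 1)
    (hinit : h1 0 = h0 0 + 1)
    (j : ℕ) (hj : j < k) (hlt : dseq h0 h1 j < dseq h0 h1 (j + 1)) :
    h0 (j + 1) = h0 j ∧ h1 (j + 1) = h1 j - 1 ∧
      h0 (j + 1) - dseq h0 h1 (j + 1) = (h0 j - dseq h0 h1 j) - 1 ∧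
      h1 (j + 1) + dseq h0 h1 (j + 1) = h1 j + dseq h0 h1 j := by
  have hsucc : dseq h0 h1 (j + 1)
      = max (h0 (j + 1) + 1 - h1 (j + 1)) (dseq h0 h1 j) := by
    unfold dseq
    rw [Finset.sup'_congr _ (Finset.range_add_one (n := j + 1)) (fun _ _ => rfl),
      Finset.sup'_insert]
  have hle : h0 j + 1 - h1 j ≤ dseq h0 h1 j := by
    unfold dseq
    exact Finset.le_sup' (fun j' => h0 j' + 1 - h1 j') (Finset.self_mem_range_succ j)
  have heq : dseq h0 h1 (j + 1) = h0 (j + 1) + 1 - h1 (j + 1) := by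
    rcases max_cases (h0 (j + 1) + 1 - h1 (j + 1)) (dseq h0 h1 j) with ⟨h, _⟩ | ⟨h, _⟩
    · rw [hsucc, h]
    · omega
  rcases hd0 j hj with h0e | h0e <;> rcases hd1 j hj with h1e | h1e <;> omega
end

section
/- The forward transformation (h_0,h_1) ↦ (h'_0,h'_1) defined by h'_0 = h_0 - d, h'_1 = h_1 + d with d_j = max_{j'≤j}(h_0(j')+1-h_1(j')), is inverted by the backward transformation: setting e_j = min({d_k} ∪ {h'_1(j')-h'_0(j')-1 : j ≤ j' ≤ k}), one has e_j = d_j for all 0 ≤ j ≤ k, hence h'_0 + e = h_0 and h'_1 - e = h_1. -/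
/-- `eseq d ha hb k j = min({d} ∪ {hb j' - ha j' - 1 : j ≤ j' ≤ k})`. -/
def eseq (d : ℤ) (ha hb : ℕ → ℤ) (k j : ℕ) : ℤ :=
  (insert d ((Finset.Icc j k).image fun j' => hb j' - ha j' - 1)).min'
    (Finset.insert_nonempty _ _)

theorem backward_inverts_forward (k : ℕ) (h0 h1 : ℕ → ℤ)
    (hd0 : ∀ j < k, h0 (j + 1) = h0 j ∨ h0 (j + 1) = h0 j - 1)
    (hd1 : ∀ j < k, h1 (j + 1) = h1 j ∨ h1 (j + 1) = h1 j - 1)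
    (hinit : h1 0 = h0 0 + 1) :
    ∀ j ≤ k,
      eseq (dseq h0 h1 k) (fun j' => h0 j' - dseq h0 h1 j')
        (fun j' => h1 j' + dseq h0 h1 j') k j = dseq h0 h1 j := by
  set f : ℕ → ℤ := fun j => h0 j + 1 - h1 j with hf
  set d : ℕ → ℤ := dseq h0 h1 with hd
  have dmono : ∀ {a b : ℕ}, a ≤ b → d a ≤ d b := by
    intro a b hab
    exact Finset.sup'_mono _ (Finset.range_subset_range.mpr (by omega)) _
  have fled : ∀ j, f j ≤ d j := fun j =>
    Finset.le_sup' _ (Finset.mem_range.mpr (Nat.lt_succ_self j))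
  have fstep : ∀ j < k, f j - 1 ≤ f (j + 1) ∧ f (j + 1) ≤ f j + 1 := by
    intro j hj
    have h := hd0 j hj
    have h' := hd1 j hj
    simp only [hf]
    omega
  have key : ∀ j ≤ k, d j < d k →
      ∃ m, j ≤ m ∧ m ≤ k ∧ d m = d j ∧ f m = d j := by
    intro j hj hlt
    have hP : ∃ m, j ≤ m ∧ m ≤ k ∧ d j < d m := ⟨k, hj, le_rfl, hlt⟩
    classical
    obtain ⟨m0, ⟨hjm0, hm0k, hdm0⟩, hmin⟩ :
        ∃ m0, (j ≤ m0 ∧ m0 ≤ k ∧ d j < d m0) ∧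
          ∀ m < m0, ¬(j ≤ m ∧ m ≤ k ∧ d j < d m) :=
      ⟨Nat.find hP, Nat.find_spec hP, fun m hm => Nat.find_min hP hm⟩
    have hm0j : j < m0 := by
      rcases Nat.lt_or_ge j m0 with h | h
      · exact h
      · exfalso
        have : m0 = j := le_antisymm h hjm0
        rw [this] at hdm0; exact lt_irrefl _ hdm0
    have hprev : d (m0 - 1) = d j := by
      have hnot := hmin (m0 - 1) (by omega)
      push_neg at hnot
      have h1' := hnot (by omega) (by omega)
      exact le_antisymm h1' (dmono (by omega))
    -- d m0 is attained at some m' ≤ m0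
    obtain ⟨m', hm', hval⟩ := Finset.exists_mem_eq_sup'
      (Finset.nonempty_range_iff.mpr m0.succ_ne_zero)
      (fun j' => h0 j' + 1 - h1 j')
    have hm'lt : m' < m0 + 1 := Finset.mem_range.mp hm'
    have hfm0 : f m0 = d m0 := by
      rcases Nat.lt_or_ge m' m0 with hlt' | hge
      · exfalso
        have h1' : f m' ≤ d m' := fled m'
        have h2' : d m' ≤ d (m0 - 1) := dmono (by omega)
        have : d m0 = f m' := hval
        omega
      · have : m' = m0 := by omega
        subst this
        exact hval.symm
    have hstep := fstep (m0 - 1) (by omega)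
    have hm0succ : m0 - 1 + 1 = m0 := by omega
    rw [hm0succ] at hstep
    have hfprev : f (m0 - 1) ≤ d j := hprev ▸ fled (m0 - 1)
    refine ⟨m0 - 1, by omega, by omega, hprev, ?_⟩
    omega
  intro j hj
  have eub : ∀ y ∈ (insert (d k) ((Finset.Icc j k).image fun j' =>
      ((fun j' => h1 j' + d j') j' - (fun j' => h0 j' - d j') j' - 1))), d j ≤ y := by
    intro y hy
    rcases Finset.mem_insert.mp hy with h | h
    · subst h; exact dmono hj
    · obtain ⟨m, hm, hym⟩ := Finset.mem_image.mp h
      obtain ⟨hjm, hmk⟩ := Finset.mem_Icc.mp hm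
      beta_reduce at hym
      have h1' : d j ≤ d m := dmono hjm
      have h2' : f m ≤ d m := fled m
      simp only [hf] at h2'
      omega
  apply le_antisymm
  · -- e ≤ d j
    rcases eq_or_lt_of_le (dmono hj) with heq | hlt
    · calc eseq (d k) _ _ k j ≤ d k := Finset.min'_le _ _ (Finset.mem_insert_self _ _)
        _ = d j := heq.symm
    · obtain ⟨m, hjm, hmk, hdm, hfm⟩ := key j hj hlt
      apply Finset.min'_le
      apply Finset.mem_insert_of_mem
      apply Finset.mem_image.mpr
      refine ⟨m, Finset.mem_Icc.mpr ⟨hjm, hmk⟩, ?_⟩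
      beta_reduce
      simp only [hf] at hfm
      omega
  · exact Finset.le_min' _ _ _ eub
end

section
/- Let h'_0, h'_1 : {0,...,k} → ℤ be weakly decreasing with decrements in {0,1}, satisfying h'_0(j) < h'_1(j) for all j and h'_1(0) = h'_0(0)+1, and let 0 ≤ d ≤ h'_1(k)-h'_0(k)-1. Define e_j = min({d} ∪ {h'_1(j')-h'_0(j')-1 : j ≤ j' ≤ k}). Then (e_0,...,e_k) is weakly increasing with increments in {0,1}, e_0 = 0 and e_k = d, and the functions h_0 = h'_0 + e and h_1 = h'_1 - e are weakly decreasing with decrements in {0,1} and satisfy h_1(0) = h_0(0)+1. -/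
lemma eseq_le_d (d : ℤ) (ha hb : ℕ → ℤ) (k j : ℕ) : eseq d ha hb k j ≤ d :=
  Finset.min'_le _ _ (Finset.mem_insert_self _ _)

lemma eseq_le (d : ℤ) (ha hb : ℕ → ℤ) (k : ℕ) {j j' : ℕ} (h1 : j ≤ j') (h2 : j' ≤ k) :
    eseq d ha hb k j ≤ hb j' - ha j' - 1 :=
  Finset.min'_le _ _ (Finset.mem_insert_of_mem
    (Finset.mem_image_of_mem _ (Finset.mem_Icc.mpr ⟨h1, h2⟩)))

lemma le_eseq (d : ℤ) (ha hb : ℕ → ℤ) (k j : ℕ) (c : ℤ) (hcd : c ≤ d)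
    (hc : ∀ j', j ≤ j' → j' ≤ k → c ≤ hb j' - ha j' - 1) : c ≤ eseq d ha hb k j := by
  apply Finset.le_min'
  intro y hy
  rcases Finset.mem_insert.mp hy with h | h
  · exact h ▸ hcd
  · obtain ⟨j', hj', rfl⟩ := Finset.mem_image.mp h
    obtain ⟨h1, h2⟩ := Finset.mem_Icc.mp hj'
    exact hc j' h1 h2

lemma eseq_rec (d : ℤ) (ha hb : ℕ → ℤ) (k : ℕ) {j : ℕ} (hj : j < k) :
    eseq d ha hb k j = min (hb j - ha j - 1) (eseq d ha hb k (j + 1)) := by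
  apply le_antisymm
  · apply le_min
    · exact eseq_le d ha hb k le_rfl hj.le
    · refine le_eseq _ _ _ _ _ _ (eseq_le_d _ _ _ _ _) ?_
      intro j' hj1 hj2
      exact eseq_le d ha hb k (Nat.le_of_succ_le hj1) hj2
  · apply le_eseq
    · exact (min_le_right _ _).trans (eseq_le_d _ _ _ _ _)
    · intro j' hj1 hj2
      rcases Nat.eq_or_lt_of_le hj1 with rfl | h
      · exact min_le_left _ _
      · exact (min_le_right _ _).trans (eseq_le d ha hb k h hj2)

theorem backward_well_defined (k : ℕ) (h0' h1' : ℕ → ℤ)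
    (hd0 : ∀ j < k, h0' (j + 1) = h0' j ∨ h0' (j + 1) = h0' j - 1)
    (hd1 : ∀ j < k, h1' (j + 1) = h1' j ∨ h1' (j + 1) = h1' j - 1)
    (hdisj : ∀ j ≤ k, h0' j < h1' j)
    (hinit : h1' 0 = h0' 0 + 1)
    (d : ℤ) (hd_nonneg : 0 ≤ d) (hd_le : d ≤ h1' k - h0' k - 1) :
    eseq d h0' h1' k 0 = 0 ∧ eseq d h0' h1' k k = d ∧
      (∀ j < k, eseq d h0' h1' k (j + 1) = eseq d h0' h1' k j ∨
        eseq d h0' h1' k (j + 1) = eseq d h0' h1' k j + 1) ∧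
      (∀ j < k,
        (h0' (j + 1) + eseq d h0' h1' k (j + 1) = h0' j + eseq d h0' h1' k j ∨
          h0' (j + 1) + eseq d h0' h1' k (j + 1) = h0' j + eseq d h0' h1' k j - 1) ∧
        (h1' (j + 1) - eseq d h0' h1' k (j + 1) = h1' j - eseq d h0' h1' k j ∨
          h1' (j + 1) - eseq d h0' h1' k (j + 1) = h1' j - eseq d h0' h1' k j - 1)) ∧
      h1' 0 - eseq d h0' h1' k 0 = (h0' 0 + eseq d h0' h1' k 0) + 1 := by
  set e := eseq d h0' h1' k with he
  -- step lemma
  have step : ∀ j < k, e (j + 1) = e j ∨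
      (e (j + 1) = e j + 1 ∧ e j = h1' j - h0' j - 1 ∧
        e j + 1 ≤ h1' (j + 1) - h0' (j + 1) - 1) := by
    intro j hj
    have hrec := eseq_rec d h0' h1' k hj
    rcases le_or_gt (e (j + 1)) (h1' j - h0' j - 1) with h | h
    · left
      rw [he, hrec, min_eq_right h]
    · right
      have hej : e j = h1' j - h0' j - 1 := by rw [he, hrec, min_eq_left h.le]
      have h1 : e (j + 1) ≤ h1' (j + 1) - h0' (j + 1) - 1 :=
        eseq_le d h0' h1' k le_rfl hj
      have h2 : h1' (j + 1) - h0' (j + 1) - 1 ≤ (h1' j - h0' j - 1) + 1 := by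
        rcases hd0 j hj with h0 | h0 <;> rcases hd1 j hj with h1 | h1 <;> omega
      refine ⟨?_, hej, by omega⟩
      omega
  have he0 : e 0 = 0 := by
    have h1 : e 0 ≤ h1' 0 - h0' 0 - 1 := eseq_le d h0' h1' k le_rfl (Nat.zero_le k)
    have h2 : (0 : ℤ) ≤ e 0 := by
      apply le_eseq _ _ _ _ _ _ hd_nonneg
      intro j' _ hj2
      have := hdisj j' hj2
      omega
    omega
  have hek : e k = d := by
    have h1 : e k ≤ d := eseq_le_d d h0' h1' k k
    have h2 : d ≤ e k := by
      apply le_eseq _ _ _ _ _ _ le_rfl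
      intro j' hj1 hj2
      have : j' = k := le_antisymm hj2 hj1
      subst this
      exact hd_le
    omega
  refine ⟨he0, hek, ?_, ?_, by omega⟩
  · intro j hj
    rcases step j hj with h | ⟨h, _⟩ <;> omega
  · intro j hj
    rcases step j hj with h | ⟨h, h2, h3⟩ <;>
      rcases hd0 j hj with g0 | g0 <;> rcases hd1 j hj with g1 | g1 <;>
      constructor <;> omega
end

section
/- Suppose h_0, h_1, h_2 : {0,...,k} → ℤ are weakly decreasing with decrements in {0,1}, with h_1(j) < h_2(j) for all j (P_{i+1} and P_{i+2} initially disjoint). Let d_j = max_{j'≤j}(h_0(j')+1-h_1(j')) with d_0 = 0, set h'_1 = h_1 + d, and let e_j = max_{j'≤j}(h'_1(j')+1-h_2(j')) with e_0 = 0. Then e_j ≤ d_j for all 0 ≤ j ≤ k; consequently h_0(j) - d_j < h'_1(j) - e_j for all j, i.e., untangling P_{i+1} from P_{i+2} does not reintroduce an intersection with the already-untangled P_i. -/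
theorem forward_no_bounce_back (k : ℕ) (h0 h1 h2 : ℕ → ℤ)
    (hd0 : ∀ j < k, h0 (j + 1) = h0 j ∨ h0 (j + 1) = h0 j - 1)
    (hd1 : ∀ j < k, h1 (j + 1) = h1 j ∨ h1 (j + 1) = h1 j - 1)
    (hd2 : ∀ j < k, h2 (j + 1) = h2 j ∨ h2 (j + 1) = h2 j - 1)
    (hdisj12 : ∀ j ≤ k, h1 j < h2 j)
    (hd_zero : dseq h0 h1 0 = 0)
    (he_zero : dseq (fun j => h1 j + dseq h0 h1 j) h2 0 = 0) :
    ∀ j ≤ k,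
      dseq (fun j' => h1 j' + dseq h0 h1 j') h2 j ≤ dseq h0 h1 j ∧
      h0 j - dseq h0 h1 j <
        (h1 j + dseq h0 h1 j) - dseq (fun j' => h1 j' + dseq h0 h1 j') h2 j := by
  intro j hj
  have key : dseq (fun j' => h1 j' + dseq h0 h1 j') h2 j ≤ dseq h0 h1 j := by
    rw [dseq]
    apply Finset.sup'_le
    intro j' hj'
    have hj'j : j' ≤ j := Nat.lt_succ_iff.mp (Finset.mem_range.mp hj')
    have h12 : h1 j' < h2 j' := hdisj12 j' (le_trans hj'j hj)
    have hmono : dseq h0 h1 j' ≤ dseq h0 h1 j := by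
      rw [dseq, dseq]
      apply Finset.sup'_le
      intro i hi
      exact Finset.le_sup' (fun j' => h0 j' + 1 - h1 j') (Finset.mem_range.mpr
        (Nat.lt_succ_of_le (le_trans (Nat.lt_succ_iff.mp (Finset.mem_range.mp hi)) hj'j)))
    linarith
  refine ⟨key, ?_⟩
  have hdj : h0 j + 1 - h1 j ≤ dseq h0 h1 j := by
    rw [dseq]
    exact Finset.le_sup' (fun j' => h0 j' + 1 - h1 j') (Finset.self_mem_range_succ j)
  linarith
end

section
/- Let S ⊆ ℤ² be finite, B = {(i,j) ∈ S : i ≡ j mod 2}, W = S \ B. Define E = {b ∈ B : b-(0,1) ∉ W}, I = {b ∈ B : b-(0,1) ∈ W}, X = {b ∈ ℤ² \ B : b-(0,1) ∈ W}. Then there is a bijection between the set of domino tilings of S (partitions of S into pairs of adjacent cells) and the set of families of vertex-disjoint paths with steps from {(1,1),(0,2),(-1,1)} that connect each point of E to a point of X, passing only through points of I, with every point of E and of X used by exactly one path. -/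
/-- The black cells of `S`: those `(i,j) ∈ S` with `i ≡ j (mod 2)`. -/
def Bset (S : Finset (ℤ × ℤ)) : Set (ℤ × ℤ) := {p | p ∈ S ∧ p.1 ≡ p.2 [ZMOD 2]}

/-- The white cells of `S`. -/
def Wset (S : Finset (ℤ × ℤ)) : Set (ℤ × ℤ) := {p | p ∈ S ∧ ¬ p.1 ≡ p.2 [ZMOD 2]}

/-- Entries: black cells of `S` whose left neighbour is not a white cell of `S`. -/
def Eset (S : Finset (ℤ × ℤ)) : Set (ℤ × ℤ) :=
  {b | b ∈ Bset S ∧ b - (0, 1) ∉ Wset S}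

/-- Interior edges: black cells of `S` whose left neighbour is a white cell of `S`. -/
def Iset (S : Finset (ℤ × ℤ)) : Set (ℤ × ℤ) :=
  {b | b ∈ Bset S ∧ b - (0, 1) ∈ Wset S}

/-- Exits: non-black cells whose left neighbour is a white cell of `S`. -/
def Xset (S : Finset (ℤ × ℤ)) : Set (ℤ × ℤ) :=
  {b | b ∉ Bset S ∧ b - (0, 1) ∈ Wset S}

/-- Two cells are adjacent if they differ by `(±1,0)` or `(0,±1)`. -/
def Adj (x y : ℤ × ℤ) : Prop :=
  y - x = (1, 0) ∨ y - x = (-1, 0) ∨ y - x = (0, 1) ∨ y - x = (0, -1)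

/-- A domino tiling of `S`: a collection of pairs of adjacent cells of `S`
covering each cell of `S` exactly once. -/
def IsDominoTiling (S : Finset (ℤ × ℤ)) (T : Finset (Finset (ℤ × ℤ))) : Prop :=
  (∀ D ∈ T, ∃ x y : ℤ × ℤ, Adj x y ∧ D = {x, y}) ∧
  (∀ D ∈ T, D ⊆ S) ∧
  (∀ s ∈ S, ∃! D, D ∈ T ∧ s ∈ D)

/-- A path with steps from `{(1,1), (0,2), (-1,1)}`. -/
def IsAztecPath (p : List (ℤ × ℤ)) : Prop :=
  p.Chain' fun u v => v - u = (1, 1) ∨ v - u = (0, 2) ∨ v - u = (-1, 1)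

/-- A family of vertex-disjoint paths with steps from `{(1,1),(0,2),(-1,1)}` connecting
each entry of `Eset S` to an exit of `Xset S`, passing only through `Iset S`, every entry
and every exit being used by exactly one path. -/
def IsPathFamily (S : Finset (ℤ × ℤ)) (F : Finset (List (ℤ × ℤ))) : Prop :=
  (∀ p ∈ F, IsAztecPath p ∧
      (∃ e ∈ Eset S, p.head? = some e) ∧
      (∃ x ∈ Xset S, p.getLast? = some x) ∧
      (∀ m : ℕ, 0 < m → m + 1 < p.length →
        ∀ q : ℤ × ℤ, p[m]? = some q → q ∈ Iset S)) ∧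
  (∀ p ∈ F, ∀ q ∈ F, p ≠ q → ∀ x : ℤ × ℤ, x ∈ p → x ∉ q) ∧
  (∀ e ∈ Eset S, ∃! p, p ∈ F ∧ p.head? = some e) ∧
  (∀ x ∈ Xset S, ∃! p, p ∈ F ∧ p.getLast? = some x)


/-!
Colour the cells by parity and let `mate T b` be the partner of the black cell `b` in the
tiling `T`. Unless `b` is matched with its left neighbour `b - (0, 1)`, the three possible
positions of its partner give the three steps `b ↦ mate T b + (0, 1)`, which end at a black cell
whose left neighbour is a white cell of `S`. Following these steps from every entry yields the
paths: they are disjoint because `mate T` is an involution, and they leave the finite set `S`,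
at an exit, because every step moves right. Conversely a path family determines the matching:
a black cell on a path is matched with the left neighbour of its successor, any other black cell
with its own left neighbour. The two constructions are mutually inverse.
-/

namespace DominoPaths

def IsBlack (p : ℤ × ℤ) : Prop := p.1 ≡ p.2 [ZMOD 2]

instance : DecidablePred IsBlack := fun p => inferInstanceAs (Decidable (p.1 ≡ p.2 [ZMOD 2]))

def IsAztecStep (u v : ℤ × ℤ) : Prop := v - u = (1, 1) ∨ v - u = (0, 2) ∨ v - u = (-1, 1)

theorem isAztecPath_iff {p : List (ℤ × ℤ)} : IsAztecPath p ↔ p.IsChain IsAztecStep := Iff.rfl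

theorem _root_.Adj.symm {x y : ℤ × ℤ} (h : Adj x y) : Adj y x := by
  obtain ⟨a, b⟩ := x; obtain ⟨c, d⟩ := y
  simp only [Adj, Prod.mk_sub_mk, Prod.mk.injEq] at h ⊢
  omega

theorem _root_.Adj.ne {x y : ℤ × ℤ} (h : Adj x y) : x ≠ y := by
  rintro rfl
  simp [Adj, Prod.ext_iff] at h

theorem _root_.Adj.isBlack_iff {x y : ℤ × ℤ} (h : Adj x y) : IsBlack x ↔ ¬ IsBlack y := by
  obtain ⟨a, b⟩ := x; obtain ⟨c, d⟩ := y
  simp only [Adj, Prod.mk_sub_mk, Prod.mk.injEq] at h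
  simp only [IsBlack, Int.ModEq]
  omega

theorem isBlack_sub_iff {x : ℤ × ℤ} : IsBlack (x - (0, 1)) ↔ ¬ IsBlack x :=
  Adj.isBlack_iff (Or.inr <| Or.inr <| Or.inl <| sub_sub_cancel x (0, 1))

theorem IsAztecStep.snd_lt {u v : ℤ × ℤ} (h : IsAztecStep u v) : u.2 < v.2 := by
  obtain ⟨a, b⟩ := u; obtain ⟨c, d⟩ := v
  simp only [IsAztecStep, Prod.mk_sub_mk, Prod.mk.injEq] at h ⊢
  omega

theorem IsAztecStep.adj_sub {u v : ℤ × ℤ} (h : IsAztecStep u v) : Adj u (v - (0, 1)) := by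
  obtain ⟨a, b⟩ := u; obtain ⟨c, d⟩ := v
  simp only [IsAztecStep, Adj, Prod.mk_sub_mk, Prod.mk.injEq] at h ⊢
  omega

theorem isAztecStep_add_of_adj {u w : ℤ × ℤ} (h : Adj u w) (hw : w ≠ u - (0, 1)) :
    IsAztecStep u (w + (0, 1)) := by
  obtain ⟨a, b⟩ := u; obtain ⟨c, d⟩ := w
  simp only [IsAztecStep, Adj, Prod.mk_sub_mk, Prod.mk_add_mk, Prod.mk.injEq, ne_eq] at h hw ⊢
  omega

theorem _root_.IsAztecPath.pairwise_snd_lt {p : List (ℤ × ℤ)} (hp : IsAztecPath p) :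
    p.Pairwise fun u v => u.2 < v.2 :=
  (hp.imp fun _ _ h => IsAztecStep.snd_lt h).pairwise

theorem left_mem_Wset_iff {S : Finset (ℤ × ℤ)} {b : ℤ × ℤ} (hb : IsBlack b) :
    b - (0, 1) ∈ Wset S ↔ b - (0, 1) ∈ S :=
  and_iff_left (isBlack_sub_iff.not.mpr (not_not.mpr hb))

variable {S : Finset (ℤ × ℤ)} {b : ℤ × ℤ}

theorem mem_Eset_iff : b ∈ Eset S ↔ b ∈ S ∧ IsBlack b ∧ b - (0, 1) ∉ S := by
  unfold Eset Bset
  constructor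
  · rintro ⟨⟨hS, hb⟩, hl⟩
    exact ⟨hS, hb, mt (left_mem_Wset_iff hb).2 hl⟩
  · rintro ⟨hS, hb, hl⟩
    exact ⟨⟨hS, hb⟩, mt (left_mem_Wset_iff hb).1 hl⟩

theorem mem_Iset_iff : b ∈ Iset S ↔ b ∈ S ∧ IsBlack b ∧ b - (0, 1) ∈ S := by
  unfold Iset Bset
  constructor
  · rintro ⟨⟨hS, hb⟩, hl⟩
    exact ⟨hS, hb, (left_mem_Wset_iff hb).1 hl⟩
  · rintro ⟨hS, hb, hl⟩
    exact ⟨⟨hS, hb⟩, (left_mem_Wset_iff hb).2 hl⟩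

theorem mem_Xset_iff : b ∈ Xset S ↔ b ∉ S ∧ IsBlack b ∧ b - (0, 1) ∈ S := by
  unfold Xset Bset
  constructor
  · rintro ⟨hB, hl⟩
    have hb : IsBlack b := not_not.1 (isBlack_sub_iff.not.1 hl.2)
    exact ⟨fun hS => hB ⟨hS, hb⟩, hb, hl.1⟩
  · rintro ⟨hS, hb, hl⟩
    exact ⟨fun h => hS h.1, (left_mem_Wset_iff hb).2 hl⟩

section Matching

variable {T : Finset (Finset (ℤ × ℤ))} {s t : ℤ × ℤ}

open Classical in
noncomputable def mate (T : Finset (Finset (ℤ × ℤ))) (s : ℤ × ℤ) : ℤ × ℤ :=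
  if h : ∃ t, t ≠ s ∧ ({s, t} : Finset (ℤ × ℤ)) ∈ T then h.choose else s

theorem mate_ne_and_pair_mem (hT : IsDominoTiling S T) (hs : s ∈ S) :
    mate T s ≠ s ∧ ({s, mate T s} : Finset (ℤ × ℤ)) ∈ T := by
  have h : ∃ t, t ≠ s ∧ ({s, t} : Finset (ℤ × ℤ)) ∈ T := by
    obtain ⟨D, ⟨hD, hsD⟩, -⟩ := hT.2.2 s hs
    obtain ⟨x, y, hxy, rfl⟩ := hT.1 D hD
    rcases Finset.mem_insert.1 hsD with rfl | hsy
    · exact ⟨y, hxy.ne.symm, hD⟩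
    · obtain rfl := Finset.mem_singleton.1 hsy
      exact ⟨x, hxy.ne, Finset.pair_comm s x ▸ hD⟩
  rw [mate, dif_pos h]
  exact h.choose_spec

theorem mate_eq_of_pair_mem (hT : IsDominoTiling S T) (hs : s ∈ S)
    (hst : ({s, t} : Finset (ℤ × ℤ)) ∈ T) : mate T s = t := by
  obtain ⟨D, -, huniq⟩ := hT.2.2 s hs
  obtain ⟨hne, hmem⟩ := mate_ne_and_pair_mem hT hs
  have hpair : ({s, mate T s} : Finset (ℤ × ℤ)) = {s, t} :=
    (huniq _ ⟨hmem, by simp⟩).trans (huniq _ ⟨hst, by simp⟩).symm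
  have : mate T s ∈ ({s, t} : Finset (ℤ × ℤ)) := hpair ▸ by simp
  simpa [hne] using this

theorem mate_mem (hT : IsDominoTiling S T) (hs : s ∈ S) : mate T s ∈ S :=
  hT.2.1 _ (mate_ne_and_pair_mem hT hs).2 (by simp)

theorem adj_mate (hT : IsDominoTiling S T) (hs : s ∈ S) : Adj s (mate T s) := by
  obtain ⟨hne, hmem⟩ := mate_ne_and_pair_mem hT hs
  obtain ⟨x, y, hxy, hD⟩ := hT.1 _ hmem
  have hs' : s ∈ ({x, y} : Finset (ℤ × ℤ)) := by rw [← hD]; simp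
  have hm : mate T s ∈ ({x, y} : Finset (ℤ × ℤ)) := by rw [← hD]; simp
  simp only [Finset.mem_insert, Finset.mem_singleton] at hs' hm
  rcases hs' with rfl | rfl <;> rcases hm with h | h
  · exact absurd h hne
  · exact h ▸ hxy
  · exact h ▸ hxy.symm
  · exact absurd h hne

theorem mate_mate (hT : IsDominoTiling S T) (hs : s ∈ S) : mate T (mate T s) = s := by
  exact mate_eq_of_pair_mem hT (mate_mem hT hs)
    (Finset.pair_comm s _ ▸ (mate_ne_and_pair_mem hT hs).2)

def tilingOfMatching (S : Finset (ℤ × ℤ)) (f : ℤ × ℤ → ℤ × ℤ) : Finset (Finset (ℤ × ℤ)) :=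
  (S.filter IsBlack).image fun b => {b, f b}

theorem mem_tilingOfMatching {f : ℤ × ℤ → ℤ × ℤ} {D : Finset (ℤ × ℤ)} :
    D ∈ tilingOfMatching S f ↔ ∃ b ∈ S, IsBlack b ∧ D = {b, f b} := by
  simp [tilingOfMatching, and_assoc, eq_comm]

theorem tilingOfMatching_congr {f g : ℤ × ℤ → ℤ × ℤ} (h : ∀ b ∈ S, IsBlack b → f b = g b) :
    tilingOfMatching S f = tilingOfMatching S g :=
  Finset.image_congr fun b hb => by
    obtain ⟨hbS, hbl⟩ := Finset.mem_filter.1 (Finset.mem_coe.1 hb)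
    simp only [h b hbS hbl]

theorem isDominoTiling_tilingOfMatching {f : ℤ × ℤ → ℤ × ℤ}
    (hf : ∀ b ∈ S, IsBlack b → f b ∈ S ∧ Adj b (f b))
    (hinj : Set.InjOn f {b | b ∈ S ∧ IsBlack b})
    (hsurj : ∀ w ∈ S, ¬ IsBlack w → ∃ b ∈ S, IsBlack b ∧ f b = w) :
    IsDominoTiling S (tilingOfMatching S f) := by
  refine ⟨?_, ?_, fun s hs => ?_⟩
  · intro D hD
    obtain ⟨b, hb, hbl, rfl⟩ := mem_tilingOfMatching.1 hD
    exact ⟨b, f b, (hf b hb hbl).2, rfl⟩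
  · intro D hD
    obtain ⟨b, hb, hbl, rfl⟩ := mem_tilingOfMatching.1 hD
    simpa [Finset.insert_subset_iff] using ⟨hb, (hf b hb hbl).1⟩
  obtain ⟨b, hb, hbl, hsb⟩ : ∃ b ∈ S, IsBlack b ∧ (s = b ∨ s = f b) := by
    by_cases hs' : IsBlack s
    · exact ⟨s, hs, hs', Or.inl rfl⟩
    · obtain ⟨b, hb, hbl, rfl⟩ := hsurj s hs hs'
      exact ⟨b, hb, hbl, Or.inr rfl⟩
  refine ⟨{b, f b}, ⟨mem_tilingOfMatching.2 ⟨b, hb, hbl, rfl⟩, ?_⟩, ?_⟩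
  · rcases hsb with rfl | rfl <;> simp
  rintro D ⟨hD, hsD⟩
  obtain ⟨b', hb', hbl', rfl⟩ := mem_tilingOfMatching.1 hD
  have white {c} (hc : c ∈ S) (hcl : IsBlack c) : ¬ IsBlack (f c) :=
    (hf c hc hcl).2.isBlack_iff.1 hcl
  have hsb' : s = b' ∨ s = f b' := by simpa using hsD
  rcases hsb with rfl | rfl <;> rcases hsb' with h | h
  · rw [h]
  · exact absurd (h ▸ hbl) (white hb' hbl')
  · exact absurd (h ▸ hbl') (white hb hbl)
  · rw [hinj ⟨hb', hbl'⟩ ⟨hb, hbl⟩ h.symm]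

theorem tilingOfMatching_mate (hT : IsDominoTiling S T) : tilingOfMatching S (mate T) = T := by
  ext D
  rw [mem_tilingOfMatching]
  constructor
  · rintro ⟨b, hb, -, rfl⟩
    exact (mate_ne_and_pair_mem hT hb).2
  · intro hD
    obtain ⟨x, y, hxy, rfl⟩ := hT.1 D hD
    have hx : x ∈ S := hT.2.1 _ hD (by simp)
    have hy : y ∈ S := hT.2.1 _ hD (by simp)
    by_cases hxb : IsBlack x
    · exact ⟨x, hx, hxb, by rw [mate_eq_of_pair_mem hT hx hD]⟩
    · refine ⟨y, hy, not_not.1 (hxy.isBlack_iff.not.1 hxb), ?_⟩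
      rw [mate_eq_of_pair_mem hT hy (Finset.pair_comm x y ▸ hD), Finset.pair_comm]

theorem mate_tilingOfMatching {f : ℤ × ℤ → ℤ × ℤ} (hT : IsDominoTiling S (tilingOfMatching S f))
    (hb : b ∈ S) (hbl : IsBlack b) : mate (tilingOfMatching S f) b = f b :=
  mate_eq_of_pair_mem hT hb (mem_tilingOfMatching.2 ⟨b, hb, hbl, rfl⟩)

end Matching

section TilingToPaths

variable {T : Finset (Finset (ℤ × ℤ))} {c e e' : ℤ × ℤ}

noncomputable def pathSucc (T : Finset (Finset (ℤ × ℤ))) (b : ℤ × ℤ) : ℤ × ℤ := mate T b + (0, 1)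

/-- A black cell of `S` lies on a path iff it is not matched with its left neighbour. -/
def IsPathCell (S : Finset (ℤ × ℤ)) (T : Finset (Finset (ℤ × ℤ))) (b : ℤ × ℤ) : Prop :=
  b ∈ S ∧ IsBlack b ∧ mate T b ≠ b - (0, 1)

@[simp]
theorem pathSucc_sub : pathSucc T b - (0, 1) = mate T b := add_sub_cancel_right _ _

noncomputable def exitTime (S : Finset (ℤ × ℤ)) (T : Finset (Finset (ℤ × ℤ))) (e : ℤ × ℤ) : ℕ :=
  sInf {k | (pathSucc T)^[k] e ∉ S}

noncomputable def tilingPath (S : Finset (ℤ × ℤ)) (T : Finset (Finset (ℤ × ℤ))) (e : ℤ × ℤ) :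
    List (ℤ × ℤ) :=
  List.iterate (pathSucc T) e (exitTime S T e + 1)

theorem iterate_mem_of_lt_exitTime {i : ℕ} (hi : i < exitTime S T e) : (pathSucc T)^[i] e ∈ S :=
  not_not.1 (Nat.notMem_of_lt_sInf hi)

theorem exitTime_eq {k : ℕ} (hk : (pathSucc T)^[k] e ∉ S)
    (hS : ∀ j < k, (pathSucc T)^[j] e ∈ S) : exitTime S T e = k := by
  refine le_antisymm (Nat.sInf_le hk) (not_lt.1 fun h => ?_)
  exact Nat.sInf_mem (s := {k | (pathSucc T)^[k] e ∉ S}) ⟨k, hk⟩ (hS _ h)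

theorem length_tilingPath : (tilingPath S T e).length = exitTime S T e + 1 :=
  List.length_iterate _ _ _

theorem getElem?_tilingPath {i : ℕ} (hi : i ≤ exitTime S T e) :
    (tilingPath S T e)[i]? = some ((pathSucc T)^[i] e) :=
  List.getElem?_iterate _ _ _ _ (Nat.lt_succ_of_le hi)

theorem getElem_tilingPath {i : ℕ} (hi : i < (tilingPath S T e).length) :
    (tilingPath S T e)[i] = (pathSucc T)^[i] e :=
  List.getElem_iterate _ _ _ _ _

theorem head?_tilingPath : (tilingPath S T e).head? = some e := rfl

theorem getLast?_tilingPath :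
    (tilingPath S T e).getLast? = some ((pathSucc T)^[exitTime S T e] e) := by
  rw [List.getLast?_eq_getElem?, length_tilingPath, Nat.add_sub_cancel, getElem?_tilingPath le_rfl]

theorem mem_tilingPath {x : ℤ × ℤ} :
    x ∈ tilingPath S T e ↔ ∃ i ≤ exitTime S T e, x = (pathSucc T)^[i] e := by
  simp only [tilingPath, List.mem_iterate, Nat.lt_succ_iff]

open Classical in
noncomputable def pathFamily (S : Finset (ℤ × ℤ)) (T : Finset (Finset (ℤ × ℤ))) :
    Finset (List (ℤ × ℤ)) :=
  (S.filter (· ∈ Eset S)).image (tilingPath S T)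

theorem mem_pathFamily {p : List (ℤ × ℤ)} :
    p ∈ pathFamily S T ↔ ∃ e ∈ Eset S, tilingPath S T e = p := by
  classical
  simp only [pathFamily, Finset.mem_image, Finset.mem_filter]
  exact ⟨fun ⟨e, ⟨_, he⟩, h⟩ => ⟨e, he, h⟩, fun ⟨e, he, h⟩ => ⟨e, ⟨(mem_Eset_iff.1 he).1, he⟩, h⟩⟩

variable (hT : IsDominoTiling S T)
include hT

theorem IsPathCell.isAztecStep (hb : IsPathCell S T b) : IsAztecStep b (pathSucc T b) :=
  isAztecStep_add_of_adj (adj_mate hT hb.1) hb.2.2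

theorem IsPathCell.isBlack_pathSucc (hb : IsPathCell S T b) : IsBlack (pathSucc T b) := by
  rw [← not_not (a := IsBlack _), ← isBlack_sub_iff, pathSucc_sub, ← (adj_mate hT hb.1).isBlack_iff]
  exact hb.2.1

theorem IsPathCell.pathSucc_mem_Iset (hb : IsPathCell S T b) (hS : pathSucc T b ∈ S) :
    pathSucc T b ∈ Iset S :=
  mem_Iset_iff.2 ⟨hS, hb.isBlack_pathSucc hT, by simpa using mate_mem hT hb.1⟩

theorem IsPathCell.pathSucc_mem_Xset (hb : IsPathCell S T b) (hS : pathSucc T b ∉ S) :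
    pathSucc T b ∈ Xset S :=
  mem_Xset_iff.2 ⟨hS, hb.isBlack_pathSucc hT, by simpa using mate_mem hT hb.1⟩

theorem IsPathCell.pathSucc_not_mem_Eset (hb : IsPathCell S T b) : pathSucc T b ∉ Eset S :=
  fun h => (mem_Eset_iff.1 h).2.2 (by simpa using mate_mem hT hb.1)

theorem IsPathCell.isPathCell_pathSucc (hb : IsPathCell S T b) (hS : pathSucc T b ∈ S) :
    IsPathCell S T (pathSucc T b) := by
  refine ⟨hS, hb.isBlack_pathSucc hT, fun h => ?_⟩
  rw [pathSucc_sub] at h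
  have : pathSucc T b = b := by rw [← mate_mate hT hS, h, mate_mate hT hb.1]
  exact (hb.isAztecStep hT).snd_lt.ne' (congrArg Prod.snd this)

theorem pathSucc_injOn : Set.InjOn (pathSucc T) S := fun b hb c hc h => by
  rw [← mate_mate hT hb, ← mate_mate hT hc, add_right_cancel h]

/-- The predecessor is `mate T (c - (0, 1))`. -/
theorem exists_pathSucc_eq (hc : IsBlack c) (hl : c - (0, 1) ∈ S) (hcS : c ∈ S → IsPathCell S T c) :
    ∃ b, IsPathCell S T b ∧ pathSucc T b = c := by
  have hmate : mate T (mate T (c - (0, 1))) = c - (0, 1) := mate_mate hT hl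
  have hsucc : pathSucc T (mate T (c - (0, 1))) = c := by simp [pathSucc, hmate]
  refine ⟨_, ⟨mate_mem hT hl, ?_, fun h => ?_⟩, hsucc⟩
  · rw [(adj_mate hT hl).symm.isBlack_iff, isBlack_sub_iff, not_not]
    exact hc
  · rw [hmate, sub_left_inj] at h
    rw [← h] at hmate
    exact (hcS (h ▸ mate_mem hT hl)).2.2 hmate

theorem isPathCell_iterate (he : e ∈ Eset S) {i : ℕ} (hS : ∀ j ≤ i, (pathSucc T)^[j] e ∈ S) :
    IsPathCell S T ((pathSucc T)^[i] e) := by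
  induction i with
  | zero =>
    obtain ⟨heS, heb, hl⟩ := mem_Eset_iff.1 he
    exact ⟨heS, heb, fun h => hl (h ▸ mate_mem hT heS)⟩
  | succ i ih =>
    rw [Function.iterate_succ_apply']
    exact (ih fun j hj => hS j (by omega)).isPathCell_pathSucc hT
      (Function.iterate_succ_apply' (pathSucc T) i e ▸ hS (i + 1) le_rfl)

/-- Each step increases the second coordinate, and `S` is finite. -/
theorem exists_iterate_not_mem (he : e ∈ Eset S) : ∃ k, (pathSucc T)^[k] e ∉ S := by
  by_contra! hS
  have hmono : StrictMono fun i => ((pathSucc T)^[i] e).2 := strictMono_nat_of_lt_succ fun i => by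
    simpa only [Function.iterate_succ_apply'] using
      ((isPathCell_iterate hT he fun j _ => hS j).isAztecStep hT).snd_lt
  exact S.finite_toSet.not_infinite
    (Set.infinite_of_injective_forall_mem (Function.Injective.of_comp hmono.injective) hS)

theorem iterate_exitTime_not_mem (he : e ∈ Eset S) : (pathSucc T)^[exitTime S T e] e ∉ S :=
  Nat.sInf_mem (s := {k | (pathSucc T)^[k] e ∉ S}) (exists_iterate_not_mem hT he)

theorem isPathCell_iterate_of_lt_exitTime (he : e ∈ Eset S) {i : ℕ} (hi : i < exitTime S T e) :
    IsPathCell S T ((pathSucc T)^[i] e) :=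
  isPathCell_iterate hT he fun _ hj => iterate_mem_of_lt_exitTime (by omega)

theorem exitTime_pos (he : e ∈ Eset S) : 0 < exitTime S T e :=
  Nat.pos_of_ne_zero fun h => iterate_exitTime_not_mem hT he (h ▸ (mem_Eset_iff.1 he).1)

theorem iterate_succ_not_mem_Eset (he : e ∈ Eset S) {i : ℕ} (hi : i < exitTime S T e) :
    (pathSucc T)^[i + 1] e ∉ Eset S := by
  rw [Function.iterate_succ_apply']
  exact (isPathCell_iterate_of_lt_exitTime hT he hi).pathSucc_not_mem_Eset hT

/-- `pathSucc T` is injective on `S` and never hits an entry, so a common point of two paths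
can be traced back to a common entry. -/
theorem eq_of_iterate_eq (he : e ∈ Eset S) (he' : e' ∈ Eset S) {i j : ℕ}
    (hi : i ≤ exitTime S T e) (hj : j ≤ exitTime S T e')
    (h : (pathSucc T)^[i] e = (pathSucc T)^[j] e') : e = e' := by
  induction i generalizing j with
  | zero =>
    cases j with
    | zero => exact h
    | succ j => exact absurd (h ▸ he) (iterate_succ_not_mem_Eset hT he' hj)
  | succ i ih =>
    cases j with
    | zero => exact absurd (h.symm ▸ he') (iterate_succ_not_mem_Eset hT he hi)
    | succ j =>
      simp only [Function.iterate_succ_apply'] at h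
      exact ih (by omega) (by omega) (pathSucc_injOn hT (iterate_mem_of_lt_exitTime hi)
        (iterate_mem_of_lt_exitTime hj) h)

/-- Follow predecessors back to an entry; they have smaller second coordinate. -/
theorem exists_iterate_eq_of_isPathCell (hc : IsPathCell S T c) :
    ∃ e ∈ Eset S, ∃ k < exitTime S T e, (pathSucc T)^[k] e = c := by
  induction hn : (S.filter (·.2 < c.2)).card using Nat.strong_induction_on generalizing c with
  | _ n ih =>
  by_cases hE : c ∈ Eset S
  · exact ⟨c, hE, 0, exitTime_pos hT hE, rfl⟩
  obtain ⟨b, hb, rfl⟩ := exists_pathSucc_eq hT hc.2.1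
    (by_contra fun hl => hE (mem_Eset_iff.2 ⟨hc.1, hc.2.1, hl⟩)) fun _ => hc
  have hbc : b.2 < (pathSucc T b).2 := (hb.isAztecStep hT).snd_lt
  have hlt : (S.filter (·.2 < b.2)).card < n := by
    rw [← hn]
    refine Finset.card_lt_card ((Finset.ssubset_iff_of_subset fun x => ?_).2 ⟨b, ?_, ?_⟩)
    · simp only [Finset.mem_filter]
      exact And.imp_right hbc.trans'
    · simp [hb.1, hbc]
    · simp
  obtain ⟨e, he, k, hk, rfl⟩ := ih _ hlt hb rfl
  refine ⟨e, he, k + 1, lt_of_le_of_ne hk fun h => iterate_exitTime_not_mem hT he ?_,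
    Function.iterate_succ_apply' _ _ _⟩
  rw [← h, Function.iterate_succ_apply']
  exact hc.1

theorem isAztecPath_tilingPath (he : e ∈ Eset S) : IsAztecPath (tilingPath S T e) := by
  rw [isAztecPath_iff, List.isChain_iff_getElem]
  intro i hi
  rw [length_tilingPath] at hi
  simp only [tilingPath, List.getElem_iterate, Function.iterate_succ_apply']
  exact (isPathCell_iterate_of_lt_exitTime hT he (by omega)).isAztecStep hT

theorem iterate_mem_Iset (he : e ∈ Eset S) {i : ℕ} (hi0 : 0 < i) (hi : i < exitTime S T e) :
    (pathSucc T)^[i] e ∈ Iset S := by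
  obtain ⟨k, rfl⟩ := Nat.exists_eq_succ_of_ne_zero hi0.ne'
  have hS := iterate_mem_of_lt_exitTime hi
  rw [Function.iterate_succ_apply'] at hS ⊢
  exact (isPathCell_iterate_of_lt_exitTime hT he (by omega)).pathSucc_mem_Iset hT hS

theorem iterate_exitTime_mem_Xset (he : e ∈ Eset S) :
    (pathSucc T)^[exitTime S T e] e ∈ Xset S := by
  obtain ⟨k, hk⟩ := Nat.exists_eq_succ_of_ne_zero (exitTime_pos hT he).ne'
  have hS := iterate_exitTime_not_mem hT he
  rw [hk, Function.iterate_succ_apply'] at hS ⊢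
  exact (isPathCell_iterate_of_lt_exitTime hT he (by omega)).pathSucc_mem_Xset hT hS

theorem exists_getLast?_tilingPath_eq {x : ℤ × ℤ} (hx : x ∈ Xset S) :
    ∃ e ∈ Eset S, (tilingPath S T e).getLast? = some x := by
  obtain ⟨hxS, hxb, hl⟩ := mem_Xset_iff.1 hx
  obtain ⟨b, hb, rfl⟩ := exists_pathSucc_eq hT hxb hl (absurd · hxS)
  obtain ⟨e, he, k, hk, rfl⟩ := exists_iterate_eq_of_isPathCell hT hb
  have hexit : exitTime S T e = k + 1 :=
    exitTime_eq (by rwa [Function.iterate_succ_apply'])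
      fun j hj => iterate_mem_of_lt_exitTime (by omega)
  exact ⟨e, he, by rw [getLast?_tilingPath, hexit, Function.iterate_succ_apply']⟩

theorem isPathFamily_pathFamily : IsPathFamily S (pathFamily S T) := by
  refine ⟨fun p hp => ?_, fun p hp q hq hpq x hxp hxq => ?_, fun e he => ?_, fun x hx => ?_⟩
  · obtain ⟨e, he, rfl⟩ := mem_pathFamily.1 hp
    refine ⟨isAztecPath_tilingPath hT he, ⟨e, he, head?_tilingPath⟩,
      ⟨_, iterate_exitTime_mem_Xset hT he, getLast?_tilingPath⟩, fun m hm0 hm q hq => ?_⟩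
    rw [length_tilingPath] at hm
    rw [getElem?_tilingPath (by omega), Option.some_inj] at hq
    exact hq ▸ iterate_mem_Iset hT he hm0 (by omega)
  · obtain ⟨e, he, rfl⟩ := mem_pathFamily.1 hp
    obtain ⟨e', he', rfl⟩ := mem_pathFamily.1 hq
    obtain ⟨i, hi, rfl⟩ := mem_tilingPath.1 hxp
    obtain ⟨j, hj, hij⟩ := mem_tilingPath.1 hxq
    exact hpq (congrArg _ (eq_of_iterate_eq hT he he' hi hj hij))
  · refine ⟨tilingPath S T e, ⟨mem_pathFamily.2 ⟨e, he, rfl⟩, head?_tilingPath⟩, ?_⟩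
    rintro p ⟨hp, hhead⟩
    obtain ⟨e', -, rfl⟩ := mem_pathFamily.1 hp
    rw [head?_tilingPath, Option.some_inj] at hhead
    rw [hhead]
  · obtain ⟨e, he, hlast⟩ := exists_getLast?_tilingPath_eq hT hx
    refine ⟨_, ⟨mem_pathFamily.2 ⟨e, he, rfl⟩, hlast⟩, ?_⟩
    rintro p ⟨hp, hlast'⟩
    obtain ⟨e', he', rfl⟩ := mem_pathFamily.1 hp
    rw [getLast?_tilingPath] at hlast hlast'
    rw [eq_of_iterate_eq hT he' he le_rfl le_rfl (Option.some_inj.1 (hlast'.trans hlast.symm))]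

end TilingToPaths

section PathsToTiling

variable {F : Finset (List (ℤ × ℤ))} {p q : List (ℤ × ℤ)}

theorem _root_.IsAztecPath.nodup {p : List (ℤ × ℤ)} (hp : IsAztecPath p) : p.Nodup :=
  hp.pairwise_snd_lt.imp fun h => ne_of_apply_ne Prod.snd h.ne

theorem _root_.IsPathFamily.isAztecStep_getElem (hF : IsPathFamily S F) (hp : p ∈ F) {i : ℕ}
    (hi : i + 1 < p.length) : IsAztecStep p[i] p[i + 1] :=
  List.isChain_iff_getElem.1 (isAztecPath_iff.1 (hF.1 p hp).1) i hi

theorem _root_.IsPathFamily.getElem_cases (hF : IsPathFamily S F) (hp : p ∈ F) {i : ℕ}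
    (hi : i < p.length) :
    (i = 0 ∧ i + 1 < p.length ∧ p[i] ∈ Eset S) ∨ (0 < i ∧ i + 1 < p.length ∧ p[i] ∈ Iset S) ∨
      (0 < i ∧ i + 1 = p.length ∧ p[i] ∈ Xset S) := by
  obtain ⟨-, ⟨e, he, hhead⟩, ⟨x, hx, hlast⟩, hint⟩ := hF.1 p hp
  rw [List.head?_eq_getElem?, List.getElem?_eq_some_iff] at hhead
  rw [List.getLast?_eq_getElem?, List.getElem?_eq_some_iff] at hlast
  obtain ⟨h0, rfl⟩ := hhead
  obtain ⟨hl, rfl⟩ := hlast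
  have hlen : 1 < p.length := by
    by_contra hlen
    have : p[p.length - 1] = p[0] := by simp only [show p.length - 1 = 0 by omega]
    exact hx.1 (this ▸ he.1)
  rcases Nat.eq_zero_or_pos i with rfl | hi0
  · exact Or.inl ⟨rfl, hlen, he⟩
  rcases Nat.lt_or_ge (i + 1) p.length with hi1 | hi1
  · exact Or.inr (Or.inl ⟨hi0, hi1, hint i hi0 hi1 _ (List.getElem?_eq_getElem hi)⟩)
  · obtain rfl : i = p.length - 1 := by omega
    exact Or.inr (Or.inr ⟨hi0, by omega, hx⟩)

theorem _root_.IsPathFamily.isBlack_getElem (hF : IsPathFamily S F) (hp : p ∈ F) {i : ℕ}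
    (hi : i < p.length) : IsBlack p[i] := by
  rcases hF.getElem_cases hp hi with ⟨-, -, h⟩ | ⟨-, -, h⟩ | ⟨-, -, h⟩
  exacts [(mem_Eset_iff.1 h).2.1, (mem_Iset_iff.1 h).2.1, (mem_Xset_iff.1 h).2.1]

theorem _root_.IsPathFamily.getElem_mem_iff (hF : IsPathFamily S F) (hp : p ∈ F) {i : ℕ}
    (hi : i < p.length) : p[i] ∈ S ↔ i + 1 < p.length := by
  rcases hF.getElem_cases hp hi with ⟨-, h1, h⟩ | ⟨-, h1, h⟩ | ⟨-, h1, h⟩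
  · simp [(mem_Eset_iff.1 h).1, h1]
  · simp [(mem_Iset_iff.1 h).1, h1]
  · simp [(mem_Xset_iff.1 h).1, h1]

theorem _root_.IsPathFamily.getElem_sub_mem_iff (hF : IsPathFamily S F) (hp : p ∈ F) {i : ℕ}
    (hi : i < p.length) : p[i] - (0, 1) ∈ S ↔ 0 < i := by
  rcases hF.getElem_cases hp hi with ⟨rfl, -, h⟩ | ⟨h0, -, h⟩ | ⟨h0, -, h⟩
  · simp [(mem_Eset_iff.1 h).2.2]
  · simp [(mem_Iset_iff.1 h).2.2, h0]
  · simp [(mem_Xset_iff.1 h).2.2, h0]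

theorem _root_.IsPathFamily.eq_and_eq_of_getElem_eq (hF : IsPathFamily S F) (hp : p ∈ F)
    (hq : q ∈ F) {i j : ℕ} (hi : i < p.length) (hj : j < q.length) (h : p[i] = q[j]) :
    p = q ∧ i = j := by
  obtain rfl : p = q := by_contra fun hpq =>
    hF.2.1 p hp q hq hpq _ (List.getElem_mem hi) (h ▸ List.getElem_mem hj)
  exact ⟨rfl, (hF.1 p hp).1.nodup.getElem_inj_iff.1 h⟩

open Classical in
/-- Off the paths `b` is its own successor, so that it is matched with its left neighbour. -/
noncomputable def familySucc (F : Finset (List (ℤ × ℤ))) (b : ℤ × ℤ) : ℤ × ℤ :=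
  if h : ∃ c, ∃ p ∈ F, ∃ i, ∃ hi : i + 1 < p.length, p[i] = b ∧ p[i + 1] = c then h.choose
  else b

theorem familySucc_getElem (hF : IsPathFamily S F) (hp : p ∈ F) {i : ℕ}
    (hi : i + 1 < p.length) : familySucc F p[i] = p[i + 1] := by
  have h : ∃ c, ∃ q ∈ F, ∃ j, ∃ hj : j + 1 < q.length, q[j] = p[i] ∧ q[j + 1] = c :=
    ⟨_, p, hp, i, hi, rfl, rfl⟩
  rw [familySucc, dif_pos h]
  obtain ⟨q, hq, j, hj, hqj, hqj1⟩ := h.choose_spec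
  obtain ⟨rfl, rfl⟩ := hF.eq_and_eq_of_getElem_eq hq hp _ _ hqj
  exact hqj1.symm

theorem familySucc_eq_self (h : ∀ p ∈ F, b ∉ p) : familySucc F b = b := by
  rw [familySucc, dif_neg]
  rintro ⟨c, p, hp, i, hi, rfl, -⟩
  exact h p hp (List.getElem_mem _)

theorem familySucc_cases (hF : IsPathFamily S F) (hb : b ∈ S) :
    (∃ p ∈ F, ∃ i, ∃ hi : i + 1 < p.length, p[i] = b ∧ familySucc F b = p[i + 1]) ∨
      (∀ p ∈ F, b ∉ p) ∧ familySucc F b = b := by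
  by_cases h : ∃ p ∈ F, b ∈ p
  · obtain ⟨p, hp, hbp⟩ := h
    obtain ⟨i, hi, rfl⟩ := List.getElem_of_mem hbp
    have hi1 := (hF.getElem_mem_iff hp hi).1 hb
    exact Or.inl ⟨p, hp, i, hi1, rfl, familySucc_getElem hF hp hi1⟩
  · push Not at h
    exact Or.inr ⟨h, familySucc_eq_self h⟩

theorem familySucc_sub_mem_and_adj (hF : IsPathFamily S F) (hb : b ∈ S) (hbl : IsBlack b) :
    familySucc F b - (0, 1) ∈ S ∧ Adj b (familySucc F b - (0, 1)) := by
  rcases familySucc_cases hF hb with ⟨p, hp, i, hi, rfl, h⟩ | ⟨hoff, h⟩ <;> rw [h]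
  · exact ⟨(hF.getElem_sub_mem_iff hp hi).2 i.succ_pos, (hF.isAztecStep_getElem hp hi).adj_sub⟩
  · refine ⟨by_contra fun hl => ?_, Or.inr (Or.inr (Or.inr (by ext <;> simp)))⟩
    obtain ⟨p, ⟨hp, hhead⟩, -⟩ := hF.2.2.1 b (mem_Eset_iff.2 ⟨hb, hbl, hl⟩)
    exact hoff p hp (List.mem_of_mem_head? hhead)

theorem familySucc_injOn (hF : IsPathFamily S F) : Set.InjOn (familySucc F) S := by
  intro b hb c hc h
  rcases familySucc_cases hF hb with ⟨p, hp, i, hi, rfl, hpb⟩ | ⟨hoffb, hb'⟩ <;>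
    rcases familySucc_cases hF hc with ⟨q, hq, j, hj, rfl, hqc⟩ | ⟨hoffc, hc'⟩
  · obtain ⟨rfl, hij⟩ := hF.eq_and_eq_of_getElem_eq hp hq hi hj (hpb ▸ hqc ▸ h)
    obtain rfl : i = j := by omega
    rfl
  · exact absurd (hc' ▸ h ▸ hpb ▸ List.getElem_mem hi) (hoffc p hp)
  · exact absurd (hb' ▸ h.symm ▸ hqc ▸ List.getElem_mem hj) (hoffb q hq)
  · rw [← hb', h, hc']

theorem exists_familySucc_eq (hF : IsPathFamily S F) {w : ℤ × ℤ} (hw : w ∈ S)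
    (hwb : ¬ IsBlack w) : ∃ b ∈ S, IsBlack b ∧ familySucc F b = w + (0, 1) := by
  have hc : IsBlack (w + (0, 1)) := by
    rwa [← not_not (a := IsBlack _), ← isBlack_sub_iff, add_sub_cancel_right]
  by_cases hon : ∃ p ∈ F, w + (0, 1) ∈ p
  · obtain ⟨p, hp, hcp⟩ := hon
    obtain ⟨i, hi, hpi⟩ := List.getElem_of_mem hcp
    have hi0 : 0 < i := (hF.getElem_sub_mem_iff hp hi).1 (by rwa [hpi, add_sub_cancel_right])
    obtain ⟨k, rfl⟩ := Nat.exists_eq_succ_of_ne_zero hi0.ne'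
    exact ⟨p[k], (hF.getElem_mem_iff hp _).2 hi, hF.isBlack_getElem hp _,
      (familySucc_getElem hF hp hi).trans hpi⟩
  · push Not at hon
    have hcS : w + (0, 1) ∈ S := by_contra fun hcS => by
      obtain ⟨p, ⟨hp, hlast⟩, -⟩ := hF.2.2.2 _ (mem_Xset_iff.2 ⟨hcS, hc, by simpa⟩)
      exact hon p hp (List.mem_of_getLast? hlast)
    exact ⟨_, hcS, hc, familySucc_eq_self hon⟩

noncomputable def pathTiling (S : Finset (ℤ × ℤ)) (F : Finset (List (ℤ × ℤ))) :
    Finset (Finset (ℤ × ℤ)) :=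
  tilingOfMatching S fun b => familySucc F b - (0, 1)

theorem isDominoTiling_pathTiling (hF : IsPathFamily S F) : IsDominoTiling S (pathTiling S F) :=
  isDominoTiling_tilingOfMatching (fun _ hb hbl => familySucc_sub_mem_and_adj hF hb hbl)
    (sub_left_injective.comp_injOn ((familySucc_injOn hF).mono fun _ hb => hb.1))
    fun w hw hwb =>
      let ⟨b, hb, hbl, h⟩ := exists_familySucc_eq hF hw hwb
      ⟨b, hb, hbl, by rw [h, add_sub_cancel_right]⟩

end PathsToTiling

section RoundTrips

variable {T : Finset (Finset (ℤ × ℤ))} {F : Finset (List (ℤ × ℤ))} {p : List (ℤ × ℤ)}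
  {e : ℤ × ℤ}

theorem familySucc_pathFamily (hT : IsDominoTiling S T) (hb : b ∈ S) (hbl : IsBlack b) :
    familySucc (pathFamily S T) b = pathSucc T b := by
  by_cases hpc : IsPathCell S T b
  · obtain ⟨e, he, k, hk, rfl⟩ := exists_iterate_eq_of_isPathCell hT hpc
    have hk1 : k + 1 < (tilingPath S T e).length := by rw [length_tilingPath]; omega
    have := familySucc_getElem (isPathFamily_pathFamily hT) (mem_pathFamily.2 ⟨e, he, rfl⟩) hk1
    rwa [getElem_tilingPath, getElem_tilingPath, Function.iterate_succ_apply'] at this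
  · have hmate : mate T b = b - (0, 1) := not_not.1 fun h => hpc ⟨hb, hbl, h⟩
    rw [pathSucc, hmate, sub_add_cancel, familySucc_eq_self]
    intro p hp hbp
    obtain ⟨e, he, rfl⟩ := mem_pathFamily.1 hp
    obtain ⟨i, hi, rfl⟩ := mem_tilingPath.1 hbp
    rcases hi.lt_or_eq with hi | rfl
    · exact hpc (isPathCell_iterate_of_lt_exitTime hT he hi)
    · exact iterate_exitTime_not_mem hT he hb

theorem pathTiling_pathFamily (hT : IsDominoTiling S T) : pathTiling S (pathFamily S T) = T :=
  calc pathTiling S (pathFamily S T) = tilingOfMatching S (mate T) :=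
        tilingOfMatching_congr fun b hb hbl => by rw [familySucc_pathFamily hT hb hbl, pathSucc_sub]
    _ = T := tilingOfMatching_mate hT

theorem pathSucc_pathTiling (hF : IsPathFamily S F) (hb : b ∈ S) (hbl : IsBlack b) :
    pathSucc (pathTiling S F) b = familySucc F b := by
  rw [pathSucc, pathTiling, mate_tilingOfMatching (isDominoTiling_pathTiling hF) hb hbl,
    sub_add_cancel]

theorem tilingPath_pathTiling (hF : IsPathFamily S F) (hp : p ∈ F) (he : p.head? = some e) :
    tilingPath S (pathTiling S F) e = p := by
  rw [List.head?_eq_getElem?, List.getElem?_eq_some_iff] at he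
  obtain ⟨h0, rfl⟩ := he
  have hiter : ∀ i (hi : i < p.length), (pathSucc (pathTiling S F))^[i] p[0] = p[i] := by
    intro i
    induction i with
    | zero => exact fun _ => rfl
    | succ i ih =>
      intro hi
      rw [Function.iterate_succ_apply', ih (by omega), pathSucc_pathTiling hF
        ((hF.getElem_mem_iff hp _).2 hi) (hF.isBlack_getElem hp _), familySucc_getElem hF hp hi]
  have hexit : exitTime S (pathTiling S F) p[0] = p.length - 1 := by
    refine exitTime_eq ?_ fun j hj => ?_
    · rw [hiter _ (by omega), hF.getElem_mem_iff hp _]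
      omega
    · rw [hiter _ (by omega), hF.getElem_mem_iff hp _]
      omega
  refine List.ext_getElem (by rw [length_tilingPath, hexit]; omega) fun i h1 _ => ?_
  rw [getElem_tilingPath, hiter]

theorem pathFamily_pathTiling (hF : IsPathFamily S F) : pathFamily S (pathTiling S F) = F := by
  ext p
  rw [mem_pathFamily]
  constructor
  · rintro ⟨e, he, rfl⟩
    obtain ⟨q, ⟨hq, hqe⟩, -⟩ := hF.2.2.1 e he
    rwa [tilingPath_pathTiling hF hq hqe]
  · intro hp
    obtain ⟨e, he, hpe⟩ := (hF.1 p hp).2.1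
    exact ⟨e, he, tilingPath_pathTiling hF hp hpe⟩

end RoundTrips

end DominoPaths

theorem domino_tilings_equiv_path_families (S : Finset (ℤ × ℤ)) :
    Nonempty ({T : Finset (Finset (ℤ × ℤ)) // IsDominoTiling S T}
      ≃ {F : Finset (List (ℤ × ℤ)) // IsPathFamily S F}) :=
  ⟨{ toFun := fun T => ⟨DominoPaths.pathFamily S T, DominoPaths.isPathFamily_pathFamily T.2⟩
     invFun := fun F => ⟨DominoPaths.pathTiling S F, DominoPaths.isDominoTiling_pathTiling F.2⟩
     left_inv := fun T => Subtype.ext (DominoPaths.pathTiling_pathFamily T.2)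
     right_inv := fun F => Subtype.ext (DominoPaths.pathFamily_pathTiling F.2) }⟩
end
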